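/- arXiv:2309.02522 — 5 statements merged into one kernel-verified Lean document; each statement's English description precedes it below -/
import Mathlib

section
/- Let B be a countably infinite index set. In the Lie algebra of row-and-column finite B×B matrices over ℂ, there exist elements x and y with [x,y] = id. (Concretely, for B = ℕ one may take tridiagonal Heisenberg matrices.) -/
/-- A `B × B` matrix is row-and-column finite if every row and every column has only
finitely many nonzero entries. -/
def RowColFinite {B : Type*} (φ : B → B → ℂ) : Prop :=
  ∀ b : B, {a | φ b a ≠ 0}.Finite ∧ {a | φ a b ≠ 0}.Finite

/-- Matrix multiplication of row-and-column finite matrices (the sum is finite). -/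
noncomputable def matMul {B : Type*} (φ ψ : B → B → ℂ) : B → B → ℂ :=
  fun a c => ∑ᶠ b, φ a b * ψ b c

/-- for a countably infinite index set `B`, there exist row-and-column
finite matrices `x` and `y` with `[x,y] = id` (the Kronecker delta matrix). -/
theorem exists_heisenberg_pair (B : Type*) [Countable B] [Infinite B] [DecidableEq B] :
    ∃ x y : B → B → ℂ, RowColFinite x ∧ RowColFinite y ∧
      ∀ a c, matMul x y a c - matMul y x a c = if a = c then (1 : ℂ) else 0 := by
  classical
  obtain ⟨e⟩ : Nonempty (B ≃ ℕ) := nonempty_equiv_of_countable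
  set x : B → B → ℂ := fun a c => if e c = e a + 1 then ((e a : ℂ) + 1) else 0 with hx
  set y : B → B → ℂ := fun a c => if e a = e c + 1 then 1 else 0 with hy
  refine ⟨x, y, ?_, ?_, ?_⟩
  · intro b
    constructor
    · apply Set.Finite.subset (Set.finite_singleton (e.symm (e b + 1)))
      intro a ha
      simp only [hx, Set.mem_setOf_eq, ne_eq, ite_eq_right_iff, not_forall] at ha
      obtain ⟨h1, _⟩ := ha
      simp [Set.mem_singleton_iff, ← h1]
    · apply Set.Subsingleton.finite
      intro a1 h1 a2 h2
      simp only [hx, Set.mem_setOf_eq, ne_eq, ite_eq_right_iff, not_forall] at h1 h2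
      obtain ⟨h1, -⟩ := h1
      obtain ⟨h2, -⟩ := h2
      exact e.injective (by omega : e a1 = e a2)
  · intro b
    constructor
    · apply Set.Subsingleton.finite
      intro a1 h1 a2 h2
      simp only [hy, Set.mem_setOf_eq, ne_eq, ite_eq_right_iff, not_forall] at h1 h2
      obtain ⟨h1, -⟩ := h1
      obtain ⟨h2, -⟩ := h2
      exact e.injective (by omega : e a1 = e a2)
    · apply Set.Finite.subset (Set.finite_singleton (e.symm (e b + 1)))
      intro a ha
      simp only [hy, Set.mem_setOf_eq, ne_eq, ite_eq_right_iff, not_forall] at ha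
      obtain ⟨h1, _⟩ := ha
      simp [Set.mem_singleton_iff, ← h1]
  · intro a c
    have hxy : matMul x y a c = if a = c then ((e a : ℂ) + 1) else 0 := by
      unfold matMul
      rw [finsum_eq_single _ (e.symm (e a + 1))]
      · simp only [hx, hy, Equiv.apply_symm_apply]
        by_cases h : a = c
        · subst h; simp
        · have : ¬ (e a + 1 = e c + 1) := by
            intro hh
            exact h (e.injective (by omega))
          simp [this, h]
      · intro b hb
        have : e b ≠ e a + 1 := by
          intro hh
          exact hb (by rw [← hh]; simp)
        simp [hx, this]
    have hyx : matMul y x a c = if a = c then ((e a : ℂ)) else 0 := by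
      unfold matMul
      rcases hn : e a with _ | n
      · have hz : ∀ b, y a b * x b c = 0 := by
          intro b
          simp [hy, hn]
        rw [finsum_eq_zero_of_forall_eq_zero hz]
        by_cases h : a = c
        · subst h; simp [hn]
        · simp [h]
      · rw [finsum_eq_single _ (e.symm n)]
        · simp only [hy, hx, Equiv.apply_symm_apply, hn]
          by_cases h : a = c
          · subst h
            simp [hn]
          · have : ¬ (e c = n + 1) := by
              intro hh
              exact h (e.injective (by omega))
            simp [this, h]
        · intro b hb
          have : e a ≠ e b + 1 := by
            intro hh
            apply hb
            apply e.injective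
            simp
            omega
          simp [hy, this]
    rw [hxy, hyx]
    by_cases h : a = c <;> simp [h]
end

section
/- Let gl^M be the Lie algebra of row-and-column finite B×B matrices over ℂ, where |B| = ℵ_t, and for 0 ≤ s ≤ t+1 let gl^M_s := {φ ∈ gl^M : every row of φ has support of cardinality < ℵ_s and every column of φ has support of cardinality < ℵ_s, i.e. φ*(V*) ⊆ V*_s}. Then gl^M_s is a Lie ideal of gl^M. -/
open Cardinal

/-- Commutator of matrices. -/
noncomputable def matComm {B : Type*} (φ ψ : B → B → ℂ) : B → B → ℂ :=
  fun a c => matMul φ ψ a c - matMul ψ φ a c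

/-- The condition `φ*(V*) ⊆ V*_s`: the dual map `φ*`, given on `x ∈ V* = Maps(B,ℂ)` by
`(φ*x)(b) = ∑_a x(a) φ(a,b)`, sends every functional to one whose support has
cardinality `< ℵ_s`. Together with row-and-column finiteness this defines `gl^M_s`. -/
def MemGlMs {B : Type*} (s : ℕ) (φ : B → B → ℂ) : Prop :=
  RowColFinite φ ∧
    ∀ x : B → ℂ, #{b | (∑ᶠ a, x a * φ a b) ≠ 0} < Cardinal.aleph s

section Aux
variable {B : Type*}
lemma matMul_support_subset (ψ φ : B → B → ℂ) (a c : B) :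
    (matMul ψ φ a c ≠ 0) → ∃ b, ψ a b ≠ 0 ∧ φ b c ≠ 0 := by
  intro h
  by_contra hc
  push_neg at hc
  apply h
  rw [matMul]
  apply finsum_eq_zero_of_forall_eq_zero
  intro b
  rcases eq_or_ne (ψ a b) 0 with h1 | h1
  · rw [h1, zero_mul]
  · rw [hc b h1, mul_zero]

lemma matMul_rowcol (ψ φ : B → B → ℂ) (hψ : RowColFinite ψ) (hφ : RowColFinite φ) :
    RowColFinite (matMul ψ φ) := by
  intro b
  constructor
  · apply Set.Finite.subset (Set.Finite.biUnion (hψ b).1 (fun i _ => (hφ i).1))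
    intro c hc
    obtain ⟨i, h1, h2⟩ := matMul_support_subset ψ φ b c hc
    exact Set.mem_biUnion h1 h2
  · apply Set.Finite.subset (Set.Finite.biUnion (hφ b).2 (fun i _ => (hψ i).2))
    intro a ha
    obtain ⟨i, h1, h2⟩ := matMul_support_subset ψ φ a b ha
    exact Set.mem_biUnion h2 h1
lemma dual_matMul (ψ φ : B → B → ℂ) (hψ : ∀ b, {a | ψ a b ≠ 0}.Finite)
    (hφc : ∀ b, {a | φ a b ≠ 0}.Finite) (x : B → ℂ) (c : B) :
    ∑ᶠ a, x a * matMul ψ φ a c = ∑ᶠ b, (∑ᶠ a, x a * ψ a b) * φ b c := by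
  classical
  set T : Finset B := (hφc c).toFinset with hT
  set S : Finset B := T.biUnion (fun b => (hψ b).toFinset) with hS
  have hinner : ∀ a, matMul ψ φ a c = ∑ b ∈ T, ψ a b * φ b c := by
    intro a
    apply finsum_eq_finset_sum_of_support_subset
    intro b hb
    simp only [Function.mem_support] at hb
    simp only [T, Set.Finite.coe_toFinset, Set.mem_setOf_eq]
    exact fun h => hb (by rw [h, mul_zero])
  have hLHS : ∑ᶠ a, x a * matMul ψ φ a c = ∑ a ∈ S, ∑ b ∈ T, x a * (ψ a b * φ b c) := by
    rw [finsum_eq_finset_sum_of_support_subset _ (s := S)]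
    · apply Finset.sum_congr rfl
      intro a _
      rw [hinner, Finset.mul_sum]
    · intro a ha
      simp only [Function.mem_support, hinner] at ha
      have : ∃ b ∈ T, ψ a b ≠ 0 := by
        by_contra h
        push_neg at h
        apply ha
        rw [Finset.sum_eq_zero, mul_zero]
        intro b hb; rw [h b hb, zero_mul]
      obtain ⟨b, hb, hab⟩ := this
      simp only [hS, Finset.coe_biUnion, Set.mem_iUnion]
      exact ⟨b, hb, by simp [hab]⟩
  have hRHS : ∑ᶠ b, (∑ᶠ a, x a * ψ a b) * φ b c = ∑ b ∈ T, ∑ a ∈ S, x a * (ψ a b * φ b c) := by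
    rw [finsum_eq_finset_sum_of_support_subset _ (s := T)]
    · apply Finset.sum_congr rfl
      intro b hb
      rw [finsum_eq_finset_sum_of_support_subset _ (s := S), Finset.sum_mul]
      · apply Finset.sum_congr rfl
        intro a _; ring
      · intro a ha
        simp only [Function.mem_support] at ha
        have : ψ a b ≠ 0 := fun h => ha (by rw [h, mul_zero])
        simp only [hS, Finset.coe_biUnion, Set.mem_iUnion]
        exact ⟨b, hb, by simp [this]⟩
    · intro b hb
      simp only [Function.mem_support] at hb
      have : φ b c ≠ 0 := fun h => hb (by rw [h, mul_zero])
      simp [T, this]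
  rw [hLHS, hRHS, Finset.sum_comm]

lemma finsum_mul_ne_zero {f g : B → ℂ} (h : ∑ᶠ b, f b * g b ≠ 0) :
    ∃ b, f b ≠ 0 ∧ g b ≠ 0 := by
  by_contra hc
  push_neg at hc
  apply h
  apply finsum_eq_zero_of_forall_eq_zero
  intro b
  rcases eq_or_ne (f b) 0 with h1 | h1
  · rw [h1, zero_mul]
  · rw [hc b h1, mul_zero]

theorem glMs_is_ideal' (t s : ℕ) (hs : s ≤ t + 1)
    (hB : #B = Cardinal.aleph t) :
    (∀ φ₁ φ₂ : B → B → ℂ, MemGlMs s φ₁ → MemGlMs s φ₂ → MemGlMs s (φ₁ + φ₂)) ∧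
    (∀ (c : ℂ) (φ : B → B → ℂ), MemGlMs s φ → MemGlMs s (c • φ)) ∧
    (∀ ψ φ : B → B → ℂ, RowColFinite ψ → MemGlMs s φ → MemGlMs s (matComm ψ φ)) := by
  have haleph0 : (ℵ₀ : Cardinal) ≤ Cardinal.aleph s := aleph0_le_aleph s
  refine ⟨?_, ?_, ?_⟩
  · rintro φ₁ φ₂ ⟨h1r, h1d⟩ ⟨h2r, h2d⟩
    refine ⟨?_, ?_⟩
    · intro b
      refine ⟨((h1r b).1.union (h2r b).1).subset ?_, ((h1r b).2.union (h2r b).2).subset ?_⟩ <;>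
      · intro a ha
        simp only [Set.mem_setOf_eq, Pi.add_apply] at ha
        by_contra hc
        simp only [Set.mem_union, Set.mem_setOf_eq, not_or, not_not] at hc
        exact ha (by rw [hc.1, hc.2, add_zero])
    · intro x
      have heq : ∀ b, (∑ᶠ a, x a * (φ₁ + φ₂) a b)
          = (∑ᶠ a, x a * φ₁ a b) + (∑ᶠ a, x a * φ₂ a b) := by
        intro b
        rw [← finsum_add_distrib ((h1r b).2.subset ?_) ((h2r b).2.subset ?_)]
        · exact finsum_congr fun a => by simp [mul_add]
        all_goals
          intro a ha
          simp only [Function.mem_support] at ha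
          exact fun h => ha (by rw [h, mul_zero])
      calc #{b | (∑ᶠ a, x a * (φ₁ + φ₂) a b) ≠ 0}
          ≤ #({b | (∑ᶠ a, x a * φ₁ a b) ≠ 0} ∪ {b | (∑ᶠ a, x a * φ₂ a b) ≠ 0} : Set B) := by
            apply Cardinal.mk_le_mk_of_subset
            intro b hb
            simp only [Set.mem_setOf_eq, heq] at hb
            by_contra hc
            simp only [Set.mem_union, Set.mem_setOf_eq, not_or, not_not] at hc
            exact hb (by rw [hc.1, hc.2, add_zero])
        _ ≤ _ + _ := Cardinal.mk_union_le _ _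
        _ < Cardinal.aleph s := Cardinal.add_lt_of_lt haleph0 (h1d x) (h2d x)
  · rintro c φ ⟨hr, hd⟩
    refine ⟨?_, ?_⟩
    · intro b
      refine ⟨(hr b).1.subset ?_, (hr b).2.subset ?_⟩ <;>
      · intro a ha
        simp only [Set.mem_setOf_eq, Pi.smul_apply, smul_eq_mul] at ha ⊢
        exact fun h => ha (by rw [h, mul_zero])
    · intro x
      rcases eq_or_ne c 0 with rfl | hc
      · have : {b | (∑ᶠ a, x a * ((0:ℂ) • φ) a b) ≠ 0} = ∅ := by
          ext b; simp [finsum_eq_zero_of_forall_eq_zero]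
        rw [this]
        simpa using (Cardinal.aleph0_pos.trans_le haleph0)
      · have heq : ∀ b, (∑ᶠ a, x a * (c • φ) a b) = c * ∑ᶠ a, x a * φ a b := by
          intro b
          rw [mul_finsum _ _]
          · exact finsum_congr fun a => by simp [Pi.smul_apply, smul_eq_mul]; ring
        have : {b | (∑ᶠ a, x a * (c • φ) a b) ≠ 0} = {b | (∑ᶠ a, x a * φ a b) ≠ 0} := by
          ext b; simp only [Set.mem_setOf_eq, heq b, mul_ne_zero_iff]; tauto
        rw [this]; exact hd x
  · rintro ψ φ hψr ⟨hφr, hφd⟩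
    have hm1 := matMul_rowcol ψ φ hψr hφr
    have hm2 := matMul_rowcol φ ψ hφr hψr
    refine ⟨?_, ?_⟩
    · intro b
      refine ⟨((hm1 b).1.union (hm2 b).1).subset ?_, ((hm1 b).2.union (hm2 b).2).subset ?_⟩ <;>
      · intro a ha
        simp only [Set.mem_setOf_eq, matComm] at ha
        by_contra hcon
        simp only [Set.mem_union, Set.mem_setOf_eq, not_or, not_not] at hcon
        exact ha (by rw [hcon.1, hcon.2, sub_zero])
    · intro x
      have heq : ∀ c, (∑ᶠ a, x a * matComm ψ φ a c)
          = (∑ᶠ a, x a * matMul ψ φ a c) - (∑ᶠ a, x a * matMul φ ψ a c) := by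
        intro c
        rw [← finsum_sub_distrib ((hm1 c).2.subset ?_) ((hm2 c).2.subset ?_)]
        · exact finsum_congr fun a => by rw [matComm]; ring
        all_goals
          intro a ha
          simp only [Function.mem_support] at ha
          exact fun h => ha (by rw [h, mul_zero])
      -- first term: (ψφ)* x = φ* (ψ* x)
      have hA : #{c | (∑ᶠ a, x a * matMul ψ φ a c) ≠ 0} < Cardinal.aleph s := by
        have : {c | (∑ᶠ a, x a * matMul ψ φ a c) ≠ 0}
            = {c | (∑ᶠ b, (∑ᶠ a, x a * ψ a b) * φ b c) ≠ 0} := by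
          ext c
          simp only [Set.mem_setOf_eq,
            dual_matMul ψ φ (fun b => (hψr b).2) (fun b => (hφr b).2) x c]
        rw [this]
        exact hφd _
      -- second term: (φψ)* x = ψ* (φ* x)
      have hB2 : #{c | (∑ᶠ a, x a * matMul φ ψ a c) ≠ 0} < Cardinal.aleph s := by
        set z : B → ℂ := fun b => ∑ᶠ a, x a * φ a b with hz
        have hzcard : #{b | z b ≠ 0} < Cardinal.aleph s := hφd x
        have hsub : {c | (∑ᶠ a, x a * matMul φ ψ a c) ≠ 0}
            ⊆ ⋃ (b : {b | z b ≠ 0}), {c | ψ (b : B) c ≠ 0} := by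
          intro c hc
          simp only [Set.mem_setOf_eq,
            dual_matMul φ ψ (fun b => (hφr b).2) (fun b => (hψr b).2) x c] at hc
          obtain ⟨b, hb1, hb2⟩ := finsum_mul_ne_zero hc
          exact Set.mem_iUnion.2 ⟨⟨b, hb1⟩, hb2⟩
        by_cases hfin : {b | z b ≠ 0}.Finite
        · have : (⋃ (b : {b | z b ≠ 0}), {c | ψ (b : B) c ≠ 0}).Finite := by
            haveI := hfin.to_subtype
            exact Set.finite_iUnion fun b => (hψr b).1
          exact ((this.subset hsub).lt_aleph0).trans_le haleph0
        · have hinf : ℵ₀ ≤ #{b | z b ≠ 0} := Cardinal.infinite_iff.mp (Set.infinite_coe_iff.mpr hfin)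
          calc #{c | (∑ᶠ a, x a * matMul φ ψ a c) ≠ 0}
              ≤ #(⋃ (b : {b | z b ≠ 0}), {c | ψ (b : B) c ≠ 0}) :=
                Cardinal.mk_le_mk_of_subset hsub
            _ ≤ #{b | z b ≠ 0} * ⨆ (b : {b | z b ≠ 0}), #{c | ψ (b : B) c ≠ 0} :=
                Cardinal.mk_iUnion_le _
            _ ≤ #{b | z b ≠ 0} * ℵ₀ := by
                apply mul_le_mul_right
                exact ciSup_le' fun b => ((hψr b).1.lt_aleph0).le
            _ = #{b | z b ≠ 0} := Cardinal.mul_aleph0_eq hinf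
            _ < Cardinal.aleph s := hzcard
      calc #{c | (∑ᶠ a, x a * matComm ψ φ a c) ≠ 0}
          ≤ #({c | (∑ᶠ a, x a * matMul ψ φ a c) ≠ 0}
              ∪ {c | (∑ᶠ a, x a * matMul φ ψ a c) ≠ 0} : Set B) := by
            apply Cardinal.mk_le_mk_of_subset
            intro c hc
            simp only [Set.mem_setOf_eq, heq] at hc
            by_contra hcon
            simp only [Set.mem_union, Set.mem_setOf_eq, not_or, not_not] at hcon
            exact hc (by rw [hcon.1, hcon.2, sub_zero])
        _ ≤ _ + _ := Cardinal.mk_union_le _ _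
        _ < Cardinal.aleph s := Cardinal.add_lt_of_lt haleph0 hA hB2
end Aux


/-- for `|B| = ℵ_t` and `0 ≤ s ≤ t+1`, the set
`gl^M_s = {φ ∈ gl^M : φ*(V*) ⊆ V*_s}` is a Lie ideal of the Lie algebra `gl^M` of
row-and-column finite `B × B` matrices: it is a linear subspace and
`[gl^M, gl^M_s] ⊆ gl^M_s`. -/
theorem glMs_is_ideal (B : Type*) (t s : ℕ) (hs : s ≤ t + 1)
    (hB : #B = Cardinal.aleph t) :
    (∀ φ₁ φ₂ : B → B → ℂ, MemGlMs s φ₁ → MemGlMs s φ₂ → MemGlMs s (φ₁ + φ₂)) ∧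
    (∀ (c : ℂ) (φ : B → B → ℂ), MemGlMs s φ → MemGlMs s (c • φ)) ∧
    (∀ ψ φ : B → B → ℂ, RowColFinite ψ → MemGlMs s φ → MemGlMs s (matComm ψ φ)) :=
  glMs_is_ideal' t s hs hB
end

section
/- Let φ be a diagonal row-and-column finite B×B matrix (all off-diagonal entries zero) with B infinite. Suppose B = B₁ ⊔ B₂ with an injection f : B₁ → B₂ such that φ(b,b) ≠ φ(f(b),f(b)) for all b ∈ B₁. For any function g : B₁ → ℂ, set x := Σ_{b∈B₁} (φ(b,b) − φ(f(b),f(b)))⁻¹ e_{b,f(b)} and y := Σ_{b∈B₁} g(b) e_{f(b),b}, where e_{a,c} is the elementary matrix. Then [y,[x,φ]] = Σ_{b∈B₁} g(b)(e_{b,b} − e_{f(b),f(b)}). -/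
open scoped Classical

/-- let `φ` be a diagonal row-and-column finite matrix, `B = B₁ ⊔ B₂`,
`f : B₁ → B₂` injective with `φ(b,b) ≠ φ(f b, f b)` for `b ∈ B₁`, and `g : B₁ → ℂ`.
With `x := Σ_{b∈B₁} (φ(b,b) − φ(f b,f b))⁻¹ e_{b,f b}` and `y := Σ_{b∈B₁} g(b) e_{f b,b}`,
one has `[y,[x,φ]] = Σ_{b∈B₁} g(b)(e_{b,b} − e_{f b,f b})`. -/
theorem double_commutator_formula (B : Type*) [Infinite B]
    (B₁ B₂ : Set B) (hdisj : Disjoint B₁ B₂) (hunion : B₁ ∪ B₂ = Set.univ)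
    (φ : B → B → ℂ) (hφ : RowColFinite φ) (hdiag : ∀ a c : B, a ≠ c → φ a c = 0)
    (f : B → B) (hfB : ∀ b ∈ B₁, f b ∈ B₂) (hfinj : Set.InjOn f B₁)
    (hne : ∀ b ∈ B₁, φ b b ≠ φ (f b) (f b)) (g : B → ℂ) :
    let x : B → B → ℂ := fun a c =>
      if a ∈ B₁ ∧ c = f a then (φ a a - φ (f a) (f a))⁻¹ else 0
    let y : B → B → ℂ := fun a c =>
      if c ∈ B₁ ∧ a = f c then g c else 0
    ∀ a c : B, matComm y (matComm x φ) a c =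
      ∑ᶠ b ∈ B₁, g b * ((if a = b ∧ c = b then (1 : ℂ) else 0) -
        (if a = f b ∧ c = f b then (1 : ℂ) else 0)) := by
  intro x y a c
  have hnB : ∀ b ∈ B₁, f b ∉ B₁ := fun b hb hc =>
    Set.disjoint_left.mp hdisj hc (hfB b hb)
  -- Step 1: compute the inner commutator.
  have hz : matComm x φ = fun a c => -(if a ∈ B₁ ∧ c = f a then (1 : ℂ) else 0) := by
    funext a c
    have h1 : matMul x φ a c = x a c * φ c c :=
      finsum_eq_single _ c fun b hb => by rw [hdiag b c hb, mul_zero]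
    have h2 : matMul φ x a c = φ a a * x a c :=
      finsum_eq_single _ a fun b hb => by rw [hdiag a b (Ne.symm hb), zero_mul]
    show matMul x φ a c - matMul φ x a c = _
    rw [h1, h2]
    by_cases h : a ∈ B₁ ∧ c = f a
    · have hx : x a c = (φ a a - φ (f a) (f a))⁻¹ := if_pos h
      have hd : φ a a - φ (f a) (f a) ≠ 0 := sub_ne_zero.mpr (hne a h.1)
      rw [hx, if_pos h, h.2]
      field_simp
      ring
    · have hx : x a c = 0 := if_neg h
      rw [hx, if_neg h]
      ring
  rw [hz]
  set Z : B → B → ℂ := fun a c => -(if a ∈ B₁ ∧ c = f a then (1 : ℂ) else 0) with hZ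
  show matMul y Z a c - matMul Z y a c = _
  rw [finsum_mem_def]
  by_cases ha : a ∈ B₁
  · -- a ∈ B₁ : first product vanishes, second gives the e_{b,b} part.
    have h1 : matMul y Z a c = 0 := by
      apply finsum_eq_zero_of_forall_eq_zero
      intro b
      have : y a b = 0 := by
        apply if_neg
        rintro ⟨hb, rfl⟩
        exact hnB b hb ha
      rw [this, zero_mul]
    have h2 : matMul Z y a c = -(if c = a then g a else 0) := by
      have : matMul Z y a c = Z a (f a) * y (f a) c := by
        apply finsum_eq_single
        intro b hb
        have : Z a b = 0 := by
          simp only [Z, neg_eq_zero]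
          apply if_neg
          rintro ⟨-, rfl⟩
          exact hb rfl
        rw [this, zero_mul]
      rw [this]
      have hZa : Z a (f a) = -1 := by simp [Z, ha]
      rw [hZa]
      by_cases hc : c = a
      · subst hc
        have : y (f c) c = g c := if_pos ⟨ha, rfl⟩
        rw [this, if_pos rfl]; ring
      · have : y (f a) c = 0 := by
          apply if_neg
          rintro ⟨hc1, hfc⟩
          exact hc (hfinj hc1 ha hfc.symm)
        rw [this, if_neg hc]; ring
    rw [h1, h2]
    have h3 : ∑ᶠ b, Set.indicator B₁ (fun b => g b * ((if a = b ∧ c = b then (1 : ℂ) else 0) -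
        (if a = f b ∧ c = f b then (1 : ℂ) else 0))) b = if c = a then g a else 0 := by
      have := finsum_eq_single (Set.indicator B₁ fun b => g b *
          ((if a = b ∧ c = b then (1 : ℂ) else 0) -
           (if a = f b ∧ c = f b then (1 : ℂ) else 0))) a ?_
      · rw [this, Set.indicator_of_mem ha]
        have hfa : ¬(a = f a ∧ c = f a) := by
          rintro ⟨h, -⟩; exact hnB a ha (h ▸ ha)
        rw [if_neg hfa]
        by_cases hc : c = a
        · rw [if_pos ⟨rfl, hc⟩, if_pos hc]; ring
        · rw [if_neg (fun h => hc h.2), if_neg hc]; ring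
      · intro b hb
        by_cases hbB : b ∈ B₁
        · rw [Set.indicator_of_mem hbB]
          have hab : ¬(a = b ∧ c = b) := fun h => hb h.1.symm
          have hfb : ¬(a = f b ∧ c = f b) := fun h => hnB b hbB (h.1 ▸ ha)
          rw [if_neg hab, if_neg hfb]; ring
        · exact Set.indicator_of_notMem hbB _
    rw [h3]
    ring
  · -- a ∉ B₁
    have h2 : matMul Z y a c = 0 := by
      apply finsum_eq_zero_of_forall_eq_zero
      intro b
      have : Z a b = 0 := by
        simp only [Z, neg_eq_zero]
        exact if_neg fun h => ha h.1
      rw [this, zero_mul]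
    rw [h2, sub_zero]
    by_cases hex : ∃ b₀, b₀ ∈ B₁ ∧ f b₀ = a
    · obtain ⟨b₀, hb₀, hfb₀⟩ := hex
      have h1 : matMul y Z a c = -(if c = f b₀ then g b₀ else 0) := by
        have : matMul y Z a c = y a b₀ * Z b₀ c := by
          apply finsum_eq_single
          intro b hb
          have : y a b = 0 := by
            apply if_neg
            rintro ⟨hbB, hfb⟩
            exact hb (hfinj hbB hb₀ (hfb ▸ hfb₀).symm)
          rw [this, zero_mul]
        rw [this]
        have hy : y a b₀ = g b₀ := if_pos ⟨hb₀, hfb₀.symm⟩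
        rw [hy]
        by_cases hc : c = f b₀
        · simp [Z, hb₀, hc]
        · have : Z b₀ c = 0 := by
            simp only [Z, neg_eq_zero]
            exact if_neg fun h => hc h.2
          rw [this, if_neg hc]; ring
      have h3 : ∑ᶠ b, Set.indicator B₁ (fun b => g b * ((if a = b ∧ c = b then (1 : ℂ) else 0) -
          (if a = f b ∧ c = f b then (1 : ℂ) else 0))) b = -(if c = f b₀ then g b₀ else 0) := by
        have := finsum_eq_single (Set.indicator B₁ fun b => g b *
            ((if a = b ∧ c = b then (1 : ℂ) else 0) -
             (if a = f b ∧ c = f b then (1 : ℂ) else 0))) b₀ ?_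
        · rw [this, Set.indicator_of_mem hb₀]
          have hab : ¬(a = b₀ ∧ c = b₀) := fun h => ha (h.1 ▸ hb₀)
          rw [if_neg hab]
          by_cases hc : c = f b₀
          · rw [if_pos ⟨hfb₀.symm, hc⟩, if_pos hc]; ring
          · rw [if_neg (fun h => hc h.2), if_neg hc]; ring
        · intro b hb
          by_cases hbB : b ∈ B₁
          · rw [Set.indicator_of_mem hbB]
            have hab : ¬(a = b ∧ c = b) := fun h => ha (h.1 ▸ hbB)
            have hfb : ¬(a = f b ∧ c = f b) := fun h =>
              hb (hfinj hbB hb₀ (h.1 ▸ hfb₀ : f b₀ = f b).symm)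
            rw [if_neg hab, if_neg hfb]; ring
          · exact Set.indicator_of_notMem hbB _
      rw [h1, h3]
    · have h1 : matMul y Z a c = 0 := by
        apply finsum_eq_zero_of_forall_eq_zero
        intro b
        have : y a b = 0 := by
          apply if_neg
          rintro ⟨hbB, hfb⟩
          exact hex ⟨b, hbB, hfb.symm⟩
        rw [this, zero_mul]
      have h3 : ∑ᶠ b, Set.indicator B₁ (fun b => g b * ((if a = b ∧ c = b then (1 : ℂ) else 0) -
          (if a = f b ∧ c = f b then (1 : ℂ) else 0))) b = 0 := by
        apply finsum_eq_zero_of_forall_eq_zero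
        intro b
        by_cases hbB : b ∈ B₁
        · rw [Set.indicator_of_mem hbB]
          have hab : ¬(a = b ∧ c = b) := fun h => ha (h.1 ▸ hbB)
          have hfb : ¬(a = f b ∧ c = f b) := fun h => hex ⟨b, hbB, h.1.symm⟩
          rw [if_neg hab, if_neg hfb]; ring
        · exact Set.indicator_of_notMem hbB _
      rw [h1, h3]
end

section
/- For Young diagrams κ₀,κ,ν,ν₀,λ₀,λ,μ,μ₀ with |λ₀|+|λ| = |κ₀|+|κ|, the number Σ_{τ,θ} N^{κ₀}_{λ₀τ} N^{λ}_{τ^⊥κ} N^{μ}_{νθ^⊥} N^{ν₀}_{θμ₀} is symmetric under simultaneously swapping (λ₀,λ;μ,μ₀) ↔ (κ,κ₀;ν₀,ν) in the roles of source and target, i.e. it equals Σ_{τ,θ} N^{λ}_{κτ} N^{κ₀}_{τ^⊥λ₀} N^{ν₀}_{μ₀θ^⊥} N^{μ}_{θν}. -/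
open scoped TensorProduct
open Classical

set_option synthInstance.maxHeartbeats 1000000
set_option maxSynthPendingDepth 3
set_option maxHeartbeats 1000000

noncomputable section

/-- The cell of the Young diagram `μ` labelled by `i ∈ Fin μ.card`. -/
def YoungDiagram.cellOf (μ : YoungDiagram) (i : Fin μ.card) : ℕ × ℕ :=
  (μ.cells.equivFin.symm i : ℕ × ℕ)

/-- A permutation of the boxes of `μ` preserves rows. -/
def YoungDiagram.RowPres (μ : YoungDiagram) (σ : Equiv.Perm (Fin μ.card)) : Prop :=
  ∀ i, (μ.cellOf (σ i)).1 = (μ.cellOf i).1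

/-- A permutation of the boxes of `μ` preserves columns. -/
def YoungDiagram.ColPres (μ : YoungDiagram) (σ : Equiv.Perm (Fin μ.card)) : Prop :=
  ∀ i, (μ.cellOf (σ i)).2 = (μ.cellOf i).2

/-- The row symmetrizer `a_μ ∈ ℂ[S_{|μ|}]`. -/
def youngA (μ : YoungDiagram) : MonoidAlgebra ℂ (Equiv.Perm (Fin μ.card)) :=
  ∑ σ ∈ Finset.univ.filter (fun σ => μ.RowPres σ), MonoidAlgebra.single σ (1 : ℂ)

/-- The signed column antisymmetrizer `b_μ ∈ ℂ[S_{|μ|}]`. -/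
def youngB (μ : YoungDiagram) : MonoidAlgebra ℂ (Equiv.Perm (Fin μ.card)) :=
  ∑ σ ∈ Finset.univ.filter (fun σ => μ.ColPres σ),
    MonoidAlgebra.single σ (((Equiv.Perm.sign σ : ℤ) : ℂ))

/-- The Young symmetrizer `c_μ = a_μ b_μ`. -/
def youngC (μ : YoungDiagram) : MonoidAlgebra ℂ (Equiv.Perm (Fin μ.card)) :=
  youngA μ * youngB μ

/-- The Specht module `ℂ^μ = ℂ[S_{|μ|}]·c_μ`, a left ideal of the group algebra. -/
def specht (μ : YoungDiagram) : Submodule ℂ (MonoidAlgebra ℂ (Equiv.Perm (Fin μ.card))) :=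
  LinearMap.range (LinearMap.mulRight ℂ (youngC μ))

/-- The `S_{|μ|}`-action on the Specht module `ℂ^μ`, by left multiplication. -/
def spechtAct (μ : YoungDiagram) (σ : Equiv.Perm (Fin μ.card)) :
    specht μ →ₗ[ℂ] specht μ :=
  LinearMap.restrict (LinearMap.mulLeft ℂ (MonoidAlgebra.single σ (1 : ℂ)))
    (by
      rintro x ⟨y, rfl⟩
      exact ⟨MonoidAlgebra.single σ (1 : ℂ) * y, by
        simp [LinearMap.mulRight_apply, LinearMap.mulLeft_apply, mul_assoc]⟩)

/-- The embedding `S_p × S_q → S_{p+q}`, transported to `Perm (Fin λ.card)` using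
`|μ| + |ν| = |λ|`. -/
def embPerm {μ ν lam : YoungDiagram} (h : μ.card + ν.card = lam.card)
    (σ : Equiv.Perm (Fin μ.card)) (τ : Equiv.Perm (Fin ν.card)) :
    Equiv.Perm (Fin lam.card) :=
  (finSumFinEquiv.trans (finCongr h)).permCongr (Equiv.sumCongr σ τ)

/-- The space of `S_p × S_q`-equivariant linear maps `ℂ^λ → ℂ^μ ⊗ ℂ^ν`. -/
def eqvHoms {μ ν lam : YoungDiagram} (h : μ.card + ν.card = lam.card) :
    Submodule ℂ (specht lam →ₗ[ℂ] (specht μ ⊗[ℂ] specht ν)) where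
  carrier := {f | ∀ σ τ x, f (spechtAct lam (embPerm h σ τ) x) =
    TensorProduct.map (spechtAct μ σ) (spechtAct ν τ) (f x)}
  zero_mem' := by intro σ τ x; simp
  add_mem' := by intro f g hf hg σ τ x; simp [hf σ τ x, hg σ τ x]
  smul_mem' := by intro c f hf σ τ x; simp [hf σ τ x]

/-- The Littlewood–Richardson coefficient `N^λ_{μν}`, defined as the dimension of the
space of `S_{|μ|} × S_{|ν|}`-equivariant maps `ℂ^λ → ℂ^μ ⊗ ℂ^ν` (and `0` unless
`|μ| + |ν| = |λ|`). -/
def LRcoeff (lam μ ν : YoungDiagram) : ℕ :=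
  if h : μ.card + ν.card = lam.card then Module.finrank ℂ (eqvHoms (μ := μ) (ν := ν) h)
  else 0

/-! ### Auxiliary lemmas -/

lemma spechtAct_coe (μ : YoungDiagram) (σ : Equiv.Perm (Fin μ.card)) (x : specht μ) :
    (spechtAct μ σ x : MonoidAlgebra ℂ (Equiv.Perm (Fin μ.card))) =
      MonoidAlgebra.single σ (1 : ℂ) * (x : MonoidAlgebra ℂ (Equiv.Perm (Fin μ.card))) := rfl

lemma spechtAct_mul (μ : YoungDiagram) (σ τ : Equiv.Perm (Fin μ.card)) (x : specht μ) :
    spechtAct μ σ (spechtAct μ τ x) = spechtAct μ (σ * τ) x := by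
  apply Subtype.ext
  simp [spechtAct_coe, ← mul_assoc, MonoidAlgebra.single_mul_single]

lemma spechtAct_one (μ : YoungDiagram) (x : specht μ) : spechtAct μ 1 x = x := by
  apply Subtype.ext
  rw [spechtAct_coe, show MonoidAlgebra.single (1 : Equiv.Perm (Fin μ.card)) (1 : ℂ) = 1 from rfl,
    one_mul]

/-- `spechtAct` as a linear equivalence. -/
def spechtActEquiv (μ : YoungDiagram) (σ : Equiv.Perm (Fin μ.card)) :
    specht μ ≃ₗ[ℂ] specht μ :=
  LinearEquiv.ofLinear (spechtAct μ σ) (spechtAct μ σ⁻¹)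
    (by ext x; simp [spechtAct_mul, spechtAct_one])
    (by ext x; simp [spechtAct_mul, spechtAct_one])

/-- The block-swap permutation. -/
def swapPerm {μ ν lam : YoungDiagram} (h : μ.card + ν.card = lam.card)
    (h' : ν.card + μ.card = lam.card) : Equiv.Perm (Fin lam.card) :=
  (finSumFinEquiv.trans (finCongr h')).symm.trans
    ((Equiv.sumComm (Fin ν.card) (Fin μ.card)).trans (finSumFinEquiv.trans (finCongr h)))

lemma swapPerm_conj {μ ν lam : YoungDiagram} (h : μ.card + ν.card = lam.card)
    (h' : ν.card + μ.card = lam.card) (σ : Equiv.Perm (Fin μ.card))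
    (τ : Equiv.Perm (Fin ν.card)) :
    swapPerm h h' * embPerm h' τ σ = embPerm h σ τ * swapPerm h h' := by
  ext x
  simp only [swapPerm, embPerm, Equiv.Perm.mul_apply, Equiv.permCongr_apply, Equiv.trans_apply,
    Equiv.symm_trans_apply, Equiv.symm_symm, Equiv.symm_apply_apply, Equiv.apply_symm_apply]
  rcases hz : finSumFinEquiv.symm ((finCongr h').symm x) with a | a <;> simp [hz]

lemma swapPerm_mul_swapPerm {μ ν lam : YoungDiagram} (h : μ.card + ν.card = lam.card)
    (h' : ν.card + μ.card = lam.card) :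
    swapPerm h' h * swapPerm h h' = 1 := by
  ext x
  simp [swapPerm, Equiv.Perm.mul_apply]

lemma comm_comm {A B : Type*} [AddCommMonoid A] [AddCommMonoid B] [Module ℂ A] [Module ℂ B]
    (y : B ⊗[ℂ] A) :
    TensorProduct.comm ℂ A B (TensorProduct.comm ℂ B A y) = y := by
  induction y with
  | zero => simp
  | tmul a b => simp [TensorProduct.comm_tmul]
  | add u v hu hv => simp [map_add, hu, hv]

lemma mem_eqvHoms_iff {μ ν lam : YoungDiagram} (h : μ.card + ν.card = lam.card)
    (f : specht lam →ₗ[ℂ] specht μ ⊗[ℂ] specht ν) :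
    f ∈ eqvHoms h ↔ ∀ σ τ x, f (spechtAct lam (embPerm h σ τ) x) =
      TensorProduct.map (spechtAct μ σ) (spechtAct ν τ) (f x) := Iff.rfl

lemma swap_equivariant {μ ν lam : YoungDiagram} (h : μ.card + ν.card = lam.card)
    (h' : ν.card + μ.card = lam.card)
    (f : specht lam →ₗ[ℂ] specht μ ⊗[ℂ] specht ν) (hf : f ∈ eqvHoms h)
    (σ : Equiv.Perm (Fin ν.card)) (τ : Equiv.Perm (Fin μ.card)) (x : specht lam) :
    TensorProduct.comm ℂ (specht μ) (specht ν)
        (f (spechtAct lam (swapPerm h h') (spechtAct lam (embPerm h' σ τ) x))) =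
      TensorProduct.map (spechtAct ν σ) (spechtAct μ τ)
        (TensorProduct.comm ℂ (specht μ) (specht ν) (f (spechtAct lam (swapPerm h h') x))) := by
  rw [spechtAct_mul, swapPerm_conj h h' τ σ, ← spechtAct_mul, hf τ σ,
    TensorProduct.map_comm]

lemma LRcoeff_comm (lam μ ν : YoungDiagram) : LRcoeff lam μ ν = LRcoeff lam ν μ := by
  unfold LRcoeff
  by_cases h : μ.card + ν.card = lam.card
  · have h' : ν.card + μ.card = lam.card := by omega
    rw [dif_pos h, dif_pos h']
    set w := swapPerm h h' with hw
    set w' := swapPerm h' h with hw'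
    set E := LinearEquiv.arrowCongr (σ₁₁' := RingHom.id ℂ) (σ₂₂' := RingHom.id ℂ) (spechtActEquiv lam w).symm
      (TensorProduct.comm ℂ (specht μ) (specht ν)) with hE
    have hEapp : ∀ (f : specht lam →ₗ[ℂ] specht μ ⊗[ℂ] specht ν) (x : specht lam),
        E f x = TensorProduct.comm ℂ (specht μ) (specht ν) (f (spechtAct lam w x)) := by
      intro f x
      simp [hE, LinearEquiv.arrowCongr_apply, spechtActEquiv]
    have hmap : Submodule.map (E : (specht lam →ₗ[ℂ] specht μ ⊗[ℂ] specht ν) →ₗ[ℂ]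
        (specht lam →ₗ[ℂ] specht ν ⊗[ℂ] specht μ)) (eqvHoms h) = eqvHoms h' := by
      apply le_antisymm
      · rintro g ⟨f, hf, rfl⟩
        intro σ τ x
        simp only [LinearEquiv.coe_coe, hEapp]
        exact swap_equivariant h h' f hf σ τ x
      · intro g hg
        refine ⟨(TensorProduct.comm ℂ (specht ν) (specht μ)).toLinearMap ∘ₗ g ∘ₗ
          spechtAct lam w', ?_, ?_⟩
        · intro σ τ x
          simp only [LinearMap.comp_apply, LinearEquiv.coe_coe]
          exact swap_equivariant h' h g hg σ τ x
        · ext x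
          simp only [LinearEquiv.coe_coe, hEapp, LinearMap.comp_apply]
          rw [spechtAct_mul, hw, hw', swapPerm_mul_swapPerm h h', spechtAct_one, comm_comm]
    calc Module.finrank ℂ (eqvHoms h)
        = Module.finrank ℂ (Submodule.map (E : (specht lam →ₗ[ℂ] specht μ ⊗[ℂ] specht ν) →ₗ[ℂ]
            (specht lam →ₗ[ℂ] specht ν ⊗[ℂ] specht μ)) (eqvHoms h)) :=
          LinearEquiv.finrank_eq (E.submoduleMap (eqvHoms h))
      _ = Module.finrank ℂ (eqvHoms h') := by rw [hmap]
  · rw [dif_neg h, dif_neg (by omega)]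

/-- Transposition as an equivalence of Young diagrams. -/
def transposeEquiv : YoungDiagram ≃ YoungDiagram where
  toFun := YoungDiagram.transpose
  invFun := YoungDiagram.transpose
  left_inv := YoungDiagram.transpose_transpose
  right_inv := YoungDiagram.transpose_transpose

end

/-- for Young diagrams `κ₀,κ,ν,ν₀,λ₀,λ,μ,μ₀` with `|λ₀|+|λ| = |κ₀|+|κ|`,
the number `Σ_{τ,θ} N^{κ₀}_{λ₀τ} N^{λ}_{τ^⊥κ} N^{μ}_{νθ^⊥} N^{ν₀}_{θμ₀}` is symmetric
under simultaneously swapping `(λ₀,λ;μ,μ₀) ↔ (κ,κ₀;ν₀,ν)`: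
it equals `Σ_{τ,θ} N^{λ}_{κτ} N^{κ₀}_{τ^⊥λ₀} N^{ν₀}_{μ₀θ^⊥} N^{μ}_{θν}`. -/
theorem ext_symmetry_identity (kap0 kap nu nu0 lam0 lam mu mu0 : YoungDiagram)
    (hsize : lam0.card + lam.card = kap0.card + kap.card) :
    ∑ᶠ τ : YoungDiagram, ∑ᶠ θ : YoungDiagram,
        LRcoeff kap0 lam0 τ * LRcoeff lam τ.transpose kap *
          LRcoeff mu nu θ.transpose * LRcoeff nu0 θ mu0 =
      ∑ᶠ τ : YoungDiagram, ∑ᶠ θ : YoungDiagram,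
        LRcoeff lam kap τ * LRcoeff kap0 τ.transpose lam0 *
          LRcoeff nu0 mu0 θ.transpose * LRcoeff mu θ nu := by
  set F : YoungDiagram → YoungDiagram → ℕ := fun τ θ =>
    LRcoeff lam kap τ * LRcoeff kap0 τ.transpose lam0 *
      LRcoeff nu0 mu0 θ.transpose * LRcoeff mu θ nu with hF
  have hterm : ∀ τ θ : YoungDiagram,
      LRcoeff kap0 lam0 τ * LRcoeff lam τ.transpose kap *
        LRcoeff mu nu θ.transpose * LRcoeff nu0 θ mu0
        = F (transposeEquiv τ) (transposeEquiv θ) := by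
    intro τ θ
    simp only [hF, transposeEquiv, Equiv.coe_fn_mk, YoungDiagram.transpose_transpose]
    rw [LRcoeff_comm lam kap τ.transpose, LRcoeff_comm kap0 τ lam0,
      LRcoeff_comm nu0 mu0 θ, LRcoeff_comm mu θ.transpose nu]
    ring
  calc ∑ᶠ τ : YoungDiagram, ∑ᶠ θ : YoungDiagram,
        LRcoeff kap0 lam0 τ * LRcoeff lam τ.transpose kap *
          LRcoeff mu nu θ.transpose * LRcoeff nu0 θ mu0
      = ∑ᶠ τ : YoungDiagram, ∑ᶠ θ : YoungDiagram, F (transposeEquiv τ) (transposeEquiv θ) :=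
        finsum_congr fun τ => finsum_congr fun θ => hterm τ θ
    _ = ∑ᶠ τ : YoungDiagram, ∑ᶠ θ : YoungDiagram, F (transposeEquiv τ) θ :=
        finsum_congr fun τ => finsum_comp_equiv transposeEquiv
    _ = ∑ᶠ τ : YoungDiagram, ∑ᶠ θ : YoungDiagram, F τ θ :=
        finsum_comp_equiv (f := fun τ => ∑ᶠ θ : YoungDiagram, F τ θ) transposeEquiv
end

section
/- Let g be a Lie algebra, J ⊆ g an ideal, and R a g-module on which J acts densely (for any finite set r₁,…,r_n ∈ R and any g ∈ g there is h ∈ J with g·r_i = h·r_i for all i), irreducibly, and with End_J(R) = ℂ. Then for any two g/J-modules A, B (viewed as g-modules with J acting trivially), the map Hom_g(A,B) → Hom_g(A ⊗ R, B ⊗ R), f ↦ f ⊗ id_R, is a bijection; in particular if A is a simple g/J-module then A ⊗ R is a simple g-module. -/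
open scoped TensorProduct


section Aux
variable {L : Type*} [LieRing L] [LieAlgebra ℂ L]
variable {R : Type*} [AddCommGroup R] [Module ℂ R] [LieRingModule L R] [LieModule ℂ L R]
variable {V : Type*} [AddCommGroup V] [Module ℂ V] [LieRingModule L V] [LieModule ℂ L V]
variable {ι : Type*} [DecidableEq ι]

noncomputable def thetaEquiv (e : Module.Basis ι ℂ V) : (V ⊗[ℂ] R) ≃ₗ[ℂ] (ι →₀ R) :=
  (TensorProduct.congr e.repr (LinearEquiv.refl ℂ R)).trans
    (TensorProduct.finsuppScalarLeft ℂ R ι)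

lemma thetaEquiv_tmul (e : Module.Basis ι ℂ V) (v : V) (r : R) (j : ι) :
    thetaEquiv e (v ⊗ₜ[ℂ] r) j = e.repr v j • r := by
  simp [thetaEquiv]

lemma thetaEquiv_lie (e : Module.Basis ι ℂ V) (x : L) (hx : ∀ a : V, ⁅x, a⁆ = 0)
    (t : V ⊗[ℂ] R) (j : ι) :
    thetaEquiv e ⁅x, t⁆ j = ⁅x, thetaEquiv e t j⁆ := by
  induction t using TensorProduct.induction_on with
  | zero => simp
  | tmul v r => simp [hx, thetaEquiv_tmul]
  | add t t' h h' => simp [lie_add, map_add, h, h', Finsupp.add_apply]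

lemma tmul_right_cancel (e : Module.Basis ι ℂ V) {b b' : V} {r0 : R} (h0 : r0 ≠ 0)
    (h : b ⊗ₜ[ℂ] r0 = b' ⊗ₜ[ℂ] r0) : b = b' := by
  have h3 : e.repr b = e.repr b' := by
    ext j
    have h2 : e.repr b j • r0 = e.repr b' j • r0 := by
      have := congrArg (fun t => thetaEquiv e t j) h
      simpa [thetaEquiv_tmul] using this
    have h4 : (e.repr b j - e.repr b' j) • r0 = 0 := by rw [sub_smul, h2, sub_self]
    rcases smul_eq_zero.mp h4 with h5 | h5
    · exact sub_eq_zero.mp h5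
    · exact absurd h5 h0
  exact e.repr.injective h3

lemma hom_R_to_tensor (J : LieIdeal ℂ L)
    (hV : ∀ x : L, x ∈ J → ∀ a : V, ⁅x, a⁆ = 0)
    (hR : Nontrivial R)
    (hend : ∀ f : R →ₗ[ℂ] R, (∀ x ∈ J, ∀ v : R, f ⁅x, v⁆ = ⁅x, f v⁆) →
      ∃ c : ℂ, f = c • LinearMap.id)
    (Φ : R →ₗ[ℂ] V ⊗[ℂ] R)
    (hΦ : ∀ x ∈ J, ∀ v : R, Φ ⁅x, v⁆ = ⁅x, Φ v⁆) :
    ∃! b : V, ∀ r : R, Φ r = b ⊗ₜ[ℂ] r := by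
  classical
  obtain ⟨r0, hr0⟩ := exists_ne (0 : R)
  set e : Module.Basis (Module.Basis.ofVectorSpaceIndex ℂ V) ℂ V := Module.Basis.ofVectorSpace ℂ V with he
  set Θ : (V ⊗[ℂ] R) ≃ₗ[ℂ] _ := thetaEquiv (R := R) e with hΘ
  have hψ : ∀ j, ∃ c : ℂ, ((Finsupp.lapply j : (_ →₀ R) →ₗ[ℂ] R) ∘ₗ Θ.toLinearMap ∘ₗ Φ)
      = c • LinearMap.id := by
    intro j
    apply hend
    intro x hx v
    simp only [LinearMap.comp_apply, LinearEquiv.coe_coe, Finsupp.lapply_apply]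
    rw [hΦ x hx v, thetaEquiv_lie e x (hV x hx)]
  choose c hc using hψ
  have hcval : ∀ j r, Θ (Φ r) j = c j • r := by
    intro j r
    have := congrArg (fun f => f r) (hc j)
    simpa using this
  have hsupp : ∀ j, c j ≠ 0 → j ∈ (Θ (Φ r0)).support := by
    intro j hj
    rw [Finsupp.mem_support_iff, hcval]
    exact fun h => hj (by rcases smul_eq_zero.mp h with h | h; exact h; exact absurd h hr0)
  set cF : _ →₀ ℂ := Finsupp.onFinset (Θ (Φ r0)).support c (fun j hj => hsupp j hj) with hcF
  refine ⟨e.repr.symm cF, fun r => ?_, fun b' hb' => ?_⟩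
  · apply Θ.injective
    ext j
    rw [hcval, thetaEquiv_tmul]
    simp [hcF]
  · apply tmul_right_cancel e hr0
    rw [← hb' r0]
    apply Θ.injective
    ext j
    rw [hcval, thetaEquiv_tmul]
    simp [hcF]
end Aux

/-- let `g` be a Lie algebra, `J ⊆ g` an ideal, and `R` a `g`-module on
which `J` acts densely, irreducibly, and with `End_J(R) = ℂ`. Then for any two
`g/J`-modules `A`, `B` (i.e. `g`-modules with trivial `J`-action), every `g`-module map
`A ⊗ R → B ⊗ R` is of the form `f ⊗ id_R` for a unique `g`-module map `f : A → B`
(so `f ↦ f ⊗ id_R` is a bijection `Hom_g(A,B) → Hom_g(A⊗R, B⊗R)`); in particular, if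
`A` is a simple `g/J`-module then `A ⊗ R` is a simple `g`-module. -/
theorem tensor_by_dense_module_fully_faithful
    (L : Type*) [LieRing L] [LieAlgebra ℂ L] (J : LieIdeal ℂ L)
    (R : Type*) [AddCommGroup R] [Module ℂ R] [LieRingModule L R] [LieModule ℂ L R]
    (A : Type*) [AddCommGroup A] [Module ℂ A] [LieRingModule L A] [LieModule ℂ L A]
    (B : Type*) [AddCommGroup B] [Module ℂ B] [LieRingModule L B] [LieModule ℂ L B]
    (hA : ∀ x : L, x ∈ J → ∀ a : A, ⁅x, a⁆ = 0)
    (hB : ∀ x : L, x ∈ J → ∀ b : B, ⁅x, b⁆ = 0)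
    (hdense : ∀ (n : ℕ) (r : Fin n → R) (g : L), ∃ h ∈ J, ∀ i, ⁅g, r i⁆ = ⁅h, r i⁆)
    (hirr : ∀ p : Submodule ℂ R, (∀ x ∈ J, ∀ v ∈ p, ⁅x, v⁆ ∈ p) → p = ⊥ ∨ p = ⊤)
    (hR : Nontrivial R)
    (hend : ∀ f : R →ₗ[ℂ] R, (∀ x ∈ J, ∀ v : R, f ⁅x, v⁆ = ⁅x, f v⁆) →
      ∃ c : ℂ, f = c • LinearMap.id) :
    (∀ F : (A ⊗[ℂ] R) →ₗ⁅ℂ,L⁆ (B ⊗[ℂ] R),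
      ∃! f : A →ₗ⁅ℂ,L⁆ B,
        F.toLinearMap = TensorProduct.map f.toLinearMap LinearMap.id) ∧
    (LieModule.IsIrreducible ℂ L A → LieModule.IsIrreducible ℂ L (A ⊗[ℂ] R)) := by
  classical
  obtain ⟨r0, hr0⟩ := exists_ne (0 : R)
  constructor
  · -- fullness and faithfulness
    intro F
    set eB : Module.Basis (Module.Basis.ofVectorSpaceIndex ℂ B) ℂ B := Module.Basis.ofVectorSpace ℂ B with heB
    have hcancelB : ∀ b b' : B, b ⊗ₜ[ℂ] r0 = b' ⊗ₜ[ℂ] r0 → b = b' :=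
      fun b b' h => tmul_right_cancel eB hr0 h
    have hkey : ∀ a : A, ∃! b : B, ∀ r : R, F (a ⊗ₜ[ℂ] r) = b ⊗ₜ[ℂ] r := by
      intro a
      have := hom_R_to_tensor (V := B) J hB hR hend
        (F.toLinearMap ∘ₗ ((TensorProduct.mk ℂ A R) a)) ?_
      · simpa using this
      · intro x hx v
        simp only [LinearMap.comp_apply, TensorProduct.mk_apply,
          LieModuleHom.coe_toLinearMap]
        have h1 : a ⊗ₜ[ℂ] ⁅x, v⁆ = ⁅x, a ⊗ₜ[ℂ] v⁆ := by
          rw [TensorProduct.LieModule.lie_tmul_right, hA x hx a, TensorProduct.zero_tmul,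
            zero_add]
        rw [h1, F.map_lie]
    choose f0 hf0 using fun a => (hkey a).exists
    have hadd : ∀ a a', f0 (a + a') = f0 a + f0 a' := by
      intro a a'
      apply hcancelB
      rw [← hf0 (a + a') r0, TensorProduct.add_tmul, map_add F, hf0 a r0, hf0 a' r0,
        TensorProduct.add_tmul]
    have hsmul : ∀ (m : ℂ) a, f0 (m • a) = m • f0 a := by
      intro m a
      apply hcancelB
      rw [← hf0 (m • a) r0, ← TensorProduct.smul_tmul', ← TensorProduct.smul_tmul', map_smul F,
        hf0 a r0]
    have hlie : ∀ (g : L) (a : A), f0 ⁅g, a⁆ = ⁅g, f0 a⁆ := by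
      intro g a
      apply hcancelB
      rw [← hf0 ⁅g, a⁆ r0]
      obtain ⟨h, hhJ, hh⟩ := hdense 1 ![r0] g
      have hgr : ⁅g, r0⁆ = ⁅h, r0⁆ := by simpa using hh 0
      have e1 : ⁅g, a⁆ ⊗ₜ[ℂ] r0 = ⁅g, a ⊗ₜ[ℂ] r0⁆ - a ⊗ₜ[ℂ] ⁅g, r0⁆ := by
        rw [TensorProduct.LieModule.lie_tmul_right]; abel
      have e2 : F (a ⊗ₜ[ℂ] ⁅g, r0⁆) = f0 a ⊗ₜ[ℂ] ⁅g, r0⁆ := by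
        rw [hgr]
        have h2 : a ⊗ₜ[ℂ] ⁅h, r0⁆ = ⁅h, a ⊗ₜ[ℂ] r0⁆ := by
          rw [TensorProduct.LieModule.lie_tmul_right, hA h hhJ, TensorProduct.zero_tmul,
            zero_add]
        rw [h2, F.map_lie, hf0 a r0, TensorProduct.LieModule.lie_tmul_right, hB h hhJ,
          TensorProduct.zero_tmul, zero_add]
      rw [e1, map_sub F, F.map_lie, hf0 a r0, e2, TensorProduct.LieModule.lie_tmul_right]
      abel
    set flin : A →ₗ[ℂ] B :=
      { toFun := f0, map_add' := hadd, map_smul' := hsmul } with hflin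
    set f : A →ₗ⁅ℂ,L⁆ B :=
      { toLinearMap := flin, map_lie' := fun {g a} => hlie g a } with hfdef
    refine ⟨f, ?_, ?_⟩
    · apply TensorProduct.ext'
      intro a r
      simpa [f, flin] using hf0 a r
    · intro f' hf'
      apply LieModuleHom.ext
      intro a
      apply hcancelB
      have h1 : F (a ⊗ₜ[ℂ] r0) = f' a ⊗ₜ[ℂ] r0 := by
        have := congrArg (fun G : (A ⊗[ℂ] R) →ₗ[ℂ] (B ⊗[ℂ] R) => G (a ⊗ₜ[ℂ] r0)) hf'
        simpa using this
      rw [← h1, hf0 a r0]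
      rfl
  · -- preservation of irreducibility
    intro hAirr
    haveI := hAirr
    haveI hAnt : Nontrivial A := LieModule.nontrivial_of_isIrreducible (R := ℂ) (L := L) (M := A)
    obtain ⟨a0, ha0⟩ := exists_ne (0 : A)
    set eA : Module.Basis (Module.Basis.ofVectorSpaceIndex ℂ A) ℂ A := Module.Basis.ofVectorSpace ℂ A with heA
    set Θ : (A ⊗[ℂ] R) ≃ₗ[ℂ] _ := thetaEquiv (R := R) eA with hΘdef
    haveI hTnt : Nontrivial (A ⊗[ℂ] R) := by
      refine ⟨⟨a0 ⊗ₜ[ℂ] r0, 0, fun h => ?_⟩⟩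
      obtain ⟨j, hj⟩ : ∃ j, eA.repr a0 j ≠ 0 := by
        by_contra hall; push_neg at hall
        exact ha0 (by apply eA.repr.injective; ext j; simpa using hall j)
      have h2 := congrArg (fun t => Θ t j) h
      simp only [hΘdef, thetaEquiv_tmul, map_zero, Finsupp.coe_zero, Pi.zero_apply] at h2
      rcases smul_eq_zero.mp h2 with h3 | h3
      · exact hj h3
      · exact hr0 h3
    refine ⟨fun M => ?_⟩
    by_cases hM : M = ⊥
    · exact Or.inl hM
    right
    obtain ⟨t1, ht1M, ht1⟩ : ∃ t, t ∈ M ∧ t ≠ 0 := by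
      by_contra hcon; push_neg at hcon
      exact hM ((LieSubmodule.eq_bot_iff M).mpr fun m hm => hcon m hm)
    set P : ℕ → Prop := fun n => ∃ t, t ∈ M ∧ t ≠ 0 ∧ (Θ t).support.card = n with hP
    have hPex : ∃ n, P n := ⟨_, t1, ht1M, ht1, rfl⟩
    obtain ⟨t, htM, htne, hcard⟩ := Nat.find_spec hPex
    set n := Nat.find hPex with hn
    have hmin : ∀ m, m < n → ¬ P m := fun m hm => Nat.find_min hPex hm
    set S := (Θ t).support with hSdef
    have hn0 : 0 < n := by
      rcases Nat.eq_zero_or_pos n with h | h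
      · exfalso
        rw [h] at hcard
        have : Θ t = 0 := by
          ext j
          by_contra hc
          have : j ∈ S := Finsupp.mem_support_iff.mpr hc
          rw [Finset.card_eq_zero.mp hcard] at this
          exact absurd this (Finset.notMem_empty j)
        exact htne (by simpa using Θ.injective (by simpa using this))
      · exact h
    obtain ⟨j0, hj0⟩ : ∃ j, j ∈ S := (Finset.card_pos.mp (hcard ▸ hn0)).exists_mem
    set W : Submodule ℂ (A ⊗[ℂ] R) := (M : Submodule ℂ (A ⊗[ℂ] R)) ⊓
      (Finsupp.supported R ℂ (↑S : Set _)).comap Θ.toLinearMap with hW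
    have hWmem : ∀ w, w ∈ W ↔ w ∈ M ∧ (Θ w).support ⊆ S := by
      intro w
      simp [hW, Finsupp.mem_supported, LieSubmodule.mem_toSubmodule]
    have hWt : t ∈ W := (hWmem t).mpr ⟨htM, by rw [hSdef]⟩
    have hWzero : ∀ w ∈ W, Θ w j0 = 0 → w = 0 := by
      intro w hw h0
      by_contra hne
      obtain ⟨hwM, hwS⟩ := (hWmem w).mp hw
      have hsub : (Θ w).support ⊆ S.erase j0 := by
        intro j hj
        rw [Finset.mem_erase]
        exact ⟨fun hjj => (Finsupp.mem_support_iff.mp hj) (hjj ▸ h0), hwS hj⟩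
      have hlt : (Θ w).support.card < n := by
        calc (Θ w).support.card ≤ (S.erase j0).card := Finset.card_le_card hsub
        _ = n - 1 := by rw [Finset.card_erase_of_mem hj0, hcard]
        _ < n := Nat.sub_lt hn0 one_pos
      exact hmin _ hlt ⟨w, hwM, hne, rfl⟩
    set π : W →ₗ[ℂ] R := (Finsupp.lapply j0 : (_ →₀ R) →ₗ[ℂ] R) ∘ₗ Θ.toLinearMap ∘ₗ W.subtype
      with hπ
    have hπapp : ∀ w : W, π w = Θ (w : A ⊗[ℂ] R) j0 := fun w => rfl
    have hπinj : Function.Injective π := by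
      intro w w' hww
      have hmem : ((w : A ⊗[ℂ] R) - (w' : A ⊗[ℂ] R)) ∈ W := sub_mem w.2 w'.2
      have h0 : Θ ((w : A ⊗[ℂ] R) - (w' : A ⊗[ℂ] R)) j0 = 0 := by
        rw [map_sub, Finsupp.sub_apply, ← hπapp w, ← hπapp w', hww, sub_self]
      exact Subtype.ext (sub_eq_zero.mp (hWzero _ hmem h0))
    have hWlie : ∀ x ∈ J, ∀ w, w ∈ W → ⁅x, w⁆ ∈ W := by
      intro x hx w hw
      obtain ⟨hwM, hwS⟩ := (hWmem w).mp hw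
      refine (hWmem _).mpr ⟨M.lie_mem hwM, ?_⟩
      intro j hj
      apply hwS
      rw [Finsupp.mem_support_iff] at hj ⊢
      intro hc
      exact hj (by rw [hΘdef] at hc ⊢; rw [thetaEquiv_lie eA x (hA x hx), hc, lie_zero])
    have hπsur : Function.Surjective π := by
      have hinv : ∀ x ∈ J, ∀ v ∈ LinearMap.range π, ⁅x, v⁆ ∈ LinearMap.range π := by
        rintro x hx v ⟨w, hwv⟩
        refine ⟨⟨⁅x, (w : A ⊗[ℂ] R)⁆, hWlie x hx _ w.2⟩, ?_⟩
        rw [hπapp]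
        show Θ ⁅x, (w : A ⊗[ℂ] R)⁆ j0 = ⁅x, v⁆
        rw [hΘdef, thetaEquiv_lie eA x (hA x hx), ← hΘdef]
        rw [← hwv, hπapp]
      rcases hirr (LinearMap.range π) hinv with hbot | htop
      · exfalso
        have h1 : π ⟨t, hWt⟩ = 0 := by
          have : π ⟨t, hWt⟩ ∈ LinearMap.range π := ⟨_, rfl⟩
          rw [hbot] at this
          simpa using this
        rw [hπapp] at h1
        exact (Finsupp.mem_support_iff.mp hj0) h1
      · exact LinearMap.range_eq_top.mp htop
    set ε : W ≃ₗ[ℂ] R := LinearEquiv.ofBijective π ⟨hπinj, hπsur⟩ with hε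
    have hεapp : ∀ w : W, ε w = Θ (w : A ⊗[ℂ] R) j0 := fun w => rfl
    have hεlie : ∀ x ∈ J, ∀ v : R,
        ((ε.symm ⁅x, v⁆ : W) : A ⊗[ℂ] R) = ⁅x, ((ε.symm v : W) : A ⊗[ℂ] R)⁆ := by
      intro x hx v
      have hmem : ⁅x, ((ε.symm v : W) : A ⊗[ℂ] R)⁆ ∈ W := hWlie x hx _ (ε.symm v).2
      have h1 : ε (ε.symm ⁅x, v⁆) = ε (⟨_, hmem⟩ : W) := by
        rw [ε.apply_symm_apply, hεapp]
        show ⁅x, v⁆ = Θ ⁅x, ((ε.symm v : W) : A ⊗[ℂ] R)⁆ j0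
        rw [hΘdef, thetaEquiv_lie eA x (hA x hx), ← hΘdef]
        congr 1
        rw [← hεapp, ε.apply_symm_apply]
      exact congrArg (fun w : W => (w : A ⊗[ℂ] R)) (ε.injective h1)
    have hψ : ∀ j, ∃ c : ℂ, ((Finsupp.lapply j : (_ →₀ R) →ₗ[ℂ] R) ∘ₗ Θ.toLinearMap ∘ₗ
        W.subtype ∘ₗ ε.symm.toLinearMap) = c • LinearMap.id := by
      intro j
      apply hend
      intro x hx v
      simp only [LinearMap.comp_apply, LinearEquiv.coe_coe, Finsupp.lapply_apply,
        Submodule.coe_subtype]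
      rw [hεlie x hx v]
      rw [hΘdef, thetaEquiv_lie eA x (hA x hx)]
    choose c hc using hψ
    have hcval : ∀ j v, Θ ((ε.symm v : W) : A ⊗[ℂ] R) j = c j • v := by
      intro j v
      have := congrArg (fun f => f v) (hc j)
      simpa using this
    have hj0val : ∀ v : R, Θ ((ε.symm v : W) : A ⊗[ℂ] R) j0 = v := by
      intro v
      rw [← hεapp, ε.apply_symm_apply]
    have hcj0 : c j0 ≠ 0 := by
      intro h
      have := hcval j0 r0
      rw [hj0val, h, zero_smul] at this
      exact hr0 this
    have hcS : ∀ j, j ∉ S → c j = 0 := by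
      intro j hjS
      have hsupp := ((hWmem _).mp (ε.symm r0).2).2
      have h1 : Θ ((ε.symm r0 : W) : A ⊗[ℂ] R) j = 0 := by
        by_contra hc2
        exact hjS (hsupp (Finsupp.mem_support_iff.mpr hc2))
      rw [hcval] at h1
      rcases smul_eq_zero.mp h1 with h2 | h2
      · exact h2
      · exact absurd h2 hr0
    set a : A := ∑ j ∈ S, c j • eA j with ha
    have hrepr : ∀ j, eA.repr a j = if j ∈ S then c j else 0 := by
      intro j
      rw [ha, map_sum]
      rw [Finsupp.finset_sum_apply]
      have : ∀ k ∈ S, (eA.repr (c k • eA k)) j = if k = j then c k else 0 := by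
        intro k _
        rw [map_smul, eA.repr_self]
        simp [Finsupp.single_apply]
      rw [Finset.sum_congr rfl this, Finset.sum_ite_eq' S j (fun k => c k)]
    have hane : a ≠ 0 := by
      intro h
      apply hcj0
      have := hrepr j0
      rw [h, map_zero] at this
      simpa [hj0] using this.symm
    have hmainA : ∀ s : R, a ⊗ₜ[ℂ] s ∈ M := by
      intro s
      have heq : ((ε.symm s : W) : A ⊗[ℂ] R) = a ⊗ₜ[ℂ] s := by
        apply Θ.injective
        ext j
        rw [hcval j s, hΘdef, thetaEquiv_tmul, hrepr j]
        by_cases hjS : j ∈ S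
        · simp [hjS]
        · simp [hjS, hcS j hjS]
      rw [← heq]
      exact ((hWmem _).mp (ε.symm s).2).1
    set A' : LieSubmodule ℂ L A :=
      { carrier := {a' : A | ∀ s : R, a' ⊗ₜ[ℂ] s ∈ M}
        add_mem' := fun {x y} hx hy s => by
          rw [TensorProduct.add_tmul]; exact add_mem (hx s) (hy s)
        zero_mem' := fun s => by
          rw [TensorProduct.zero_tmul]; exact zero_mem M
        smul_mem' := fun m a' ha' s => by
          rw [← TensorProduct.smul_tmul']; exact M.smul_mem m (ha' s)
        lie_mem := fun {g a'} ha' => by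
          intro s
          obtain ⟨h, hhJ, hh⟩ := hdense 1 ![s] g
          have hgs : ⁅g, s⁆ = ⁅h, s⁆ := by simpa using hh 0
          have e1 : ⁅g, a'⁆ ⊗ₜ[ℂ] s = ⁅g, a' ⊗ₜ[ℂ] s⁆ - ⁅h, a' ⊗ₜ[ℂ] s⁆ := by
            rw [TensorProduct.LieModule.lie_tmul_right, TensorProduct.LieModule.lie_tmul_right,
              hA h hhJ, TensorProduct.zero_tmul, zero_add, hgs]
            abel
          rw [e1]
          exact sub_mem (M.lie_mem (ha' s)) (M.lie_mem (ha' s)) } with hA'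
    have hA'top : A' = ⊤ := by
      rcases hAirr.eq_bot_or_eq_top A' with h | h
      · exfalso
        apply hane
        rw [LieSubmodule.eq_bot_iff] at h
        exact h a hmainA
      · exact h
    have hallpure : ∀ (a' : A) (s : R), a' ⊗ₜ[ℂ] s ∈ M := by
      intro a' s
      have hmem : a' ∈ A' := by rw [hA'top]; trivial
      exact hmem s
    rw [eq_top_iff]
    intro m _
    have hspan : (⊤ : Submodule ℂ (A ⊗[ℂ] R)) ≤ (M : Submodule ℂ (A ⊗[ℂ] R)) := by
      rw [← TensorProduct.span_tmul_eq_top ℂ A R, Submodule.span_le]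
      rintro _ ⟨a', s, rfl⟩
      exact hallpure a' s
    exact hspan (Submodule.mem_top)
end
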